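/- arXiv:1308.5446 — 2 statements merged into one kernel-verified Lean document; each statement's English description precedes it below -/
import Mathlib

section
/- Let a⁰(x) = (1/2)(−x₂, x₁) and let φ : ℝ² → ℂ be a smooth function, and let c = ∂_{x₁} + i∂_{x₂} + (1/2)(x₁ + i x₂). If φ(x) = e^{(π/(2 Im τ))(z² − |z|²)} θ(z) with x₁ + i x₂ = √(2π/Im τ) z, then cφ = 0 if and only if θ is holomorphic in z (satisfies ∂̄θ = 0). -/
open Complex

noncomputable section

/-- Partial derivative `∂_{x₁}` of a function `ℝ² → ℂ`. -/
def d1 (f : ℝ × ℝ → ℂ) (x : ℝ × ℝ) : ℂ := fderiv ℝ f x (1, 0)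

/-- Partial derivative `∂_{x₂}` of a function `ℝ² → ℂ`. -/
def d2 (f : ℝ × ℝ → ℂ) (x : ℝ × ℝ) : ℂ := fderiv ℝ f x (0, 1)

/-- The annihilation operator `c = ∂_{x₁} + i∂_{x₂} + (1/2)(x₁ + i x₂)`. -/
def annih (f : ℝ × ℝ → ℂ) (x : ℝ × ℝ) : ℂ :=
  d1 f x + Complex.I * d2 f x + (1/2 : ℂ) * ((x.1 : ℂ) + Complex.I * (x.2 : ℂ)) * f x

/-- The Cauchy–Riemann operator `∂̄ = (1/2)(∂_{Re z} + i ∂_{Im z})` on `ℂ`. -/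
def dbar (θ : ℂ → ℂ) (w : ℂ) : ℂ :=
  (1/2 : ℂ) * (fderiv ℝ θ w 1 + Complex.I * fderiv ℝ θ w Complex.I)

/-- The rescaled complex coordinate `z` with `x₁ + i x₂ = √(2π/Im τ) z`. -/
def zOf (τ : ℂ) (x : ℝ × ℝ) : ℂ :=
  (Real.sqrt (τ.im / (2 * Real.pi)) : ℂ) * ((x.1 : ℂ) + Complex.I * (x.2 : ℂ))

/-- The gauged function `φ(x) = e^{(π/(2 Im τ))(z² − |z|²)} θ(z)`. -/
def phiOf (τ : ℂ) (θ : ℂ → ℂ) (x : ℝ × ℝ) : ℂ :=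
  Complex.exp (((Real.pi / (2 * τ.im) : ℝ) : ℂ) *
      ((zOf τ x)^2 - ((‖zOf τ x‖ : ℝ) : ℂ)^2)) * θ (zOf τ x)

/-- linear map `(v₁, v₂) ↦ v₁ + i v₂`. -/
def Lu : (ℝ × ℝ) →L[ℝ] ℂ :=
  Complex.ofRealCLM.comp (ContinuousLinearMap.fst ℝ ℝ ℝ) +
  Complex.I • Complex.ofRealCLM.comp (ContinuousLinearMap.snd ℝ ℝ ℝ)

/-- linear map `(v₁, v₂) ↦ v₂`. -/
def A2 : (ℝ × ℝ) →L[ℝ] ℂ :=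
  Complex.ofRealCLM.comp (ContinuousLinearMap.snd ℝ ℝ ℝ)

lemma Lu_apply (v : ℝ × ℝ) : Lu v = (v.1 : ℂ) + Complex.I * v.2 := by
  simp [Lu, ContinuousLinearMap.add_apply, ContinuousLinearMap.smul_apply, smul_eq_mul]

lemma A2_apply (v : ℝ × ℝ) : A2 v = (v.2 : ℂ) := by simp [A2]

/-- The gauge factor simplifies to `exp((i/2) x₂ (x₁ + i x₂))`. -/
lemma phiOf_eq (τ : ℂ) (hτ : 0 < τ.im) (θ : ℂ → ℂ) :
    phiOf τ θ = fun x : ℝ × ℝ =>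
      Complex.exp ((Complex.I/2) * (x.2 : ℂ) * ((x.1 : ℂ) + Complex.I * x.2)) * θ (zOf τ x) := by
  funext x
  unfold phiOf
  congr 2
  set s : ℝ := Real.sqrt (τ.im / (2 * Real.pi)) with hs
  have hs2 : (s : ℂ)^2 = ((τ.im / (2 * Real.pi) : ℝ) : ℂ) := by
    norm_cast
    exact Real.sq_sqrt (by positivity)
  have habs : ((‖zOf τ x‖ : ℝ) : ℂ)^2 = zOf τ x * (starRingEnd ℂ) (zOf τ x) := by
    rw [Complex.mul_conj]
    norm_cast
    exact (Complex.sq_norm _)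
  have hz : zOf τ x = (s : ℂ) * ((x.1 : ℂ) + Complex.I * x.2) := rfl
  have hconj : (starRingEnd ℂ) (zOf τ x) = (s : ℂ) * ((x.1 : ℂ) - Complex.I * x.2) := by
    simp only [hz, map_mul, map_add, Complex.conj_ofReal, Complex.conj_I]
    ring
  rw [habs, hconj, hz]
  have hc : ((Real.pi / (2 * τ.im) : ℝ) : ℂ) * (s : ℂ)^2 = 1/4 := by
    rw [hs2]
    have hπ : (Real.pi : ℂ) ≠ 0 := by exact_mod_cast Real.pi_ne_zero
    have him : (τ.im : ℂ) ≠ 0 := by exact_mod_cast ne_of_gt hτ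
    push_cast
    field_simp
    ring
  set u : ℂ := (x.1 : ℂ) + Complex.I * x.2 with hu
  calc ((Real.pi / (2 * τ.im) : ℝ) : ℂ) * (((s:ℂ) * u)^2 - (s:ℂ) * u * ((s:ℂ) * ((x.1:ℂ) - Complex.I * x.2)))
      = (((Real.pi / (2 * τ.im) : ℝ) : ℂ) * (s:ℂ)^2) * (u^2 - u * ((x.1:ℂ) - Complex.I * x.2)) := by ring
    _ = (1/4 : ℂ) * (u^2 - u * ((x.1:ℂ) - Complex.I * x.2)) := by rw [hc]
    _ = (Complex.I/2) * (x.2 : ℂ) * u := by rw [hu]; ring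

/-- Key computation: the annihilation operator applied to the gauged function. -/
lemma annih_gauged (s : ℝ) (θ : ℂ → ℂ) (hθ : ContDiff ℝ (⊤ : ℕ∞) θ) (x : ℝ × ℝ) :
    annih (fun y : ℝ × ℝ =>
      Complex.exp ((Complex.I/2) * (y.2 : ℂ) * ((y.1 : ℂ) + Complex.I * y.2)) *
        θ ((s : ℂ) * ((y.1 : ℂ) + Complex.I * y.2))) x =
    Complex.exp ((Complex.I/2) * (x.2 : ℂ) * ((x.1 : ℂ) + Complex.I * x.2)) *
      (2 * (s : ℂ)) * dbar θ ((s : ℂ) * ((x.1 : ℂ) + Complex.I * x.2)) := by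
  set zx : ℂ := (s : ℂ) * ((x.1 : ℂ) + Complex.I * x.2) with hzx
  have hLu : HasFDerivAt (fun y : ℝ × ℝ => (y.1 : ℂ) + Complex.I * y.2) Lu x := by
    have := Lu.hasFDerivAt (x := x)
    convert this using 1
    funext y
    exact (Lu_apply y).symm
  have hz : HasFDerivAt (fun y : ℝ × ℝ => (s : ℂ) * ((y.1 : ℂ) + Complex.I * y.2))
      ((s : ℂ) • Lu) x := hLu.const_mul (s : ℂ)
  have hA2 : HasFDerivAt (fun y : ℝ × ℝ => (Complex.I/2) * (y.2 : ℂ))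
      ((Complex.I/2) • A2) x := by
    have := A2.hasFDerivAt (x := x)
    have h2 := this.const_mul (Complex.I/2)
    simpa only [A2_apply] using h2
  have hh : HasFDerivAt (fun y : ℝ × ℝ =>
      ((Complex.I/2) * (y.2 : ℂ)) * ((y.1 : ℂ) + Complex.I * y.2))
      (((Complex.I/2) * (x.2 : ℂ)) • Lu +
        ((x.1 : ℂ) + Complex.I * x.2) • ((Complex.I/2) • A2)) x := hA2.mul hLu
  have hE : HasFDerivAt (fun y : ℝ × ℝ =>
      Complex.exp ((Complex.I/2) * (y.2 : ℂ) * ((y.1 : ℂ) + Complex.I * y.2)))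
      (Complex.exp ((Complex.I/2) * (x.2 : ℂ) * ((x.1 : ℂ) + Complex.I * x.2)) •
        (((Complex.I/2) * (x.2 : ℂ)) • Lu +
          ((x.1 : ℂ) + Complex.I * x.2) • ((Complex.I/2) • A2))) x := hh.cexp
  have hθd : HasFDerivAt θ (fderiv ℝ θ zx) zx :=
    ((hθ.differentiable (by simp)) zx).hasFDerivAt
  have hθz : HasFDerivAt (fun y : ℝ × ℝ => θ ((s : ℂ) * ((y.1 : ℂ) + Complex.I * y.2)))
      ((fderiv ℝ θ zx).comp ((s : ℂ) • Lu)) x := hθd.comp x hz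
  have hphi := hE.mul hθz
  have hd : fderiv ℝ (fun y : ℝ × ℝ =>
      Complex.exp ((Complex.I/2) * (y.2 : ℂ) * ((y.1 : ℂ) + Complex.I * y.2)) *
        θ ((s : ℂ) * ((y.1 : ℂ) + Complex.I * y.2))) x = _ := hphi.fderiv
  unfold annih d1 d2
  rw [hd]
  simp only [ContinuousLinearMap.add_apply, ContinuousLinearMap.smul_apply,
    ContinuousLinearMap.comp_apply, Lu_apply, A2_apply, smul_eq_mul]
  have h1 : ((1 : ℝ) : ℂ) + Complex.I * ((0 : ℝ) : ℂ) = 1 := by norm_num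
  have h2 : ((0 : ℝ) : ℂ) + Complex.I * ((1 : ℝ) : ℂ) = Complex.I := by norm_num
  have hm1 : fderiv ℝ θ zx ((s : ℂ) * (((1:ℝ) : ℂ) + Complex.I * ((0:ℝ) : ℂ)))
      = (s : ℝ) • fderiv ℝ θ zx 1 := by
    rw [h1, mul_one]
    have hss : ((s : ℝ) : ℂ) = (s : ℝ) • (1 : ℂ) := by simp [Complex.real_smul]
    rw [hss, (fderiv ℝ θ zx).map_smul]
  have hm2 : fderiv ℝ θ zx ((s : ℂ) * (((0:ℝ) : ℂ) + Complex.I * ((1:ℝ) : ℂ)))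
      = (s : ℝ) • fderiv ℝ θ zx Complex.I := by
    rw [h2]
    have hss : ((s : ℝ) : ℂ) * Complex.I = (s : ℝ) • Complex.I := by
      simp [Complex.real_smul]
    rw [hss, (fderiv ℝ θ zx).map_smul]
  rw [hm1, hm2]
  unfold dbar
  push_cast
  simp only [Complex.real_smul]
  linear_combination (Complex.exp ((Complex.I/2) * (x.2 : ℂ) * ((x.1 : ℂ) + Complex.I * x.2)) *
    θ zx * (((x.1 : ℂ))/2 + Complex.I * x.2)) * Complex.I_sq

/-- with `φ(x) = e^{(π/(2 Im τ))(z² − |z|²)} θ(z)` and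
`x₁ + i x₂ = √(2π/Im τ) z`, one has `cφ = 0` if and only if `θ` is holomorphic
(i.e. `∂̄θ = 0`). -/
theorem stmt_7 (τ : ℂ) (hτ : 0 < τ.im) (θ : ℂ → ℂ) (hθ : ContDiff ℝ (⊤ : ℕ∞) θ) :
    (∀ x : ℝ × ℝ, annih (phiOf τ θ) x = 0) ↔ (∀ w : ℂ, dbar θ w = 0) := by
  set s : ℝ := Real.sqrt (τ.im / (2 * Real.pi)) with hs
  have hspos : 0 < s := Real.sqrt_pos.mpr (by positivity)
  have key : ∀ x : ℝ × ℝ, annih (phiOf τ θ) x =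
      Complex.exp ((Complex.I/2) * (x.2 : ℂ) * ((x.1 : ℂ) + Complex.I * x.2)) *
        (2 * (s : ℂ)) * dbar θ (zOf τ x) := by
    intro x
    rw [phiOf_eq τ hτ θ]
    exact annih_gauged s θ hθ x
  constructor
  · intro h w
    set x : ℝ × ℝ := ((w / (s : ℂ)).re, (w / (s : ℂ)).im) with hx
    have hsne : ((s : ℝ) : ℂ) ≠ 0 := by exact_mod_cast ne_of_gt hspos
    have hzw : zOf τ x = w := by
      unfold zOf
      have hrw : ((w / (s : ℂ)).re : ℂ) + Complex.I * ((w / (s : ℂ)).im : ℂ)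
          = w / (s : ℂ) := by
        rw [mul_comm]
        exact Complex.re_add_im _
      show (s : ℂ) * (((w / (s : ℂ)).re : ℂ) + Complex.I * ((w / (s : ℂ)).im : ℂ)) = w
      rw [hrw]
      field_simp
    have h0 := h x
    rw [key x, hzw] at h0
    have hexp : Complex.exp ((Complex.I/2) * (x.2 : ℂ) * ((x.1 : ℂ) + Complex.I * x.2)) ≠ 0 :=
      Complex.exp_ne_zero _
    have h2s : (2 * (s : ℂ)) ≠ 0 := by
      simp [hsne]
    rcases mul_eq_zero.mp h0 with h' | h'
    · rcases mul_eq_zero.mp h' with h'' | h''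
      · exact absurd h'' hexp
      · exact absurd h'' h2s
    · exact h'
  · intro h x
    rw [key x, h]
    ring

end
end

section
/- Let X be a separable Hilbert space, P and P̄ orthogonal projections with P + P̄ = 1, and H a self-adjoint operator with Ran P ⊂ D(H), such that H_{P̄} := P̄ H P̄ restricted to Ran P̄ is invertible with bounded inverse R_{P̄} = P̄ H_{P̄}^{−1} P̄, and P H R_{P̄}, R_{P̄} H P are bounded. Define the Feshbach-Schur map F_P(H) := P(H − H R_{P̄} H)P restricted to Ran P. Then Hψ = 0 for some ψ ≠ 0 if and only if F_P(H)φ = 0 for some φ ≠ 0, where the solutions are related by φ = Pψ and ψ = Qφ with Q := P − R_{P̄} H P. -/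
open scoped InnerProductSpace

/-- Feshbach–Schur isospectrality: with `P, P̄` orthogonal
projections summing to `1`, `H` symmetric (self-adjoint), `R = P̄ H_{P̄}⁻¹ P̄`
the (bounded) inverse of `H_{P̄} = P̄HP̄` on `Ran P̄`, and `PHR`, `RHP` bounded,
one has `Hψ = 0` for some `ψ ≠ 0` iff `F_P(H)φ = 0` for some `0 ≠ φ ∈ Ran P`,
where `F_P(H) = P(H − H R H)P`, and the solutions are related by `φ = Pψ`,
`ψ = Qφ` with `Q = P − R H P`. -/
theorem stmt_13
    {X : Type*} [NormedAddCommGroup X] [InnerProductSpace ℂ X] [CompleteSpace X]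
    [TopologicalSpace.SeparableSpace X]
    (P Pb : X →L[ℂ] X)
    (hPsa : ∀ x y : X, ⟪P x, y⟫_ℂ = ⟪x, P y⟫_ℂ)
    (hPidem : ∀ x, P (P x) = P x)
    (hPbsa : ∀ x y : X, ⟪Pb x, y⟫_ℂ = ⟪x, Pb y⟫_ℂ)
    (hPbidem : ∀ x, Pb (Pb x) = Pb x)
    (hsum : ∀ x, P x + Pb x = x)
    (H : X →ₗ[ℂ] X)
    (hHsym : ∀ x y : X, ⟪H x, y⟫_ℂ = ⟪x, H y⟫_ℂ)
    (R : X →L[ℂ] X)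
    (hR1 : ∀ x, R x = Pb (R (Pb x)))
    (hR2 : ∀ x, Pb (H (R (Pb x))) = Pb x)
    (hR3 : ∀ x, R (Pb (H (Pb x))) = Pb x)
    (hBdd1 : ∃ C : ℝ, ∀ x, ‖P (H (R x))‖ ≤ C * ‖x‖)
    (hBdd2 : ∃ C : ℝ, ∀ x, ‖R (H (P x))‖ ≤ C * ‖x‖) :
    (∀ ψ : X, ψ ≠ 0 → H ψ = 0 →
      P ψ ≠ 0 ∧ P (H (P ψ)) - P (H (R (H (P ψ)))) = 0) ∧
    (∀ φ : X, φ ≠ 0 → P φ = φ →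
      P (H (P φ)) - P (H (R (H (P φ)))) = 0 →
      (P φ - R (H (P φ)) ≠ 0 ∧ H (P φ - R (H (P φ))) = 0)) := by
  -- R kills and lands in Ran P̄; P P̄ = 0.
  have hRPb : ∀ x, R x = R (Pb x) := fun x => by
    rw [hR1 x, hR1 (Pb x), hPbidem]
  have hPPb : ∀ x, P (Pb x) = 0 := fun x => by
    have h := congrArg P (hsum x)
    rw [map_add, hPidem] at h
    exact add_eq_left.mp h
  constructor
  · intro ψ hψ hH
    -- key : P̄ψ = -R(H(Pψ))
    have hdec : ψ = P ψ + Pb ψ := (hsum ψ).symm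
    have hHsplit : H (P ψ) + H (Pb ψ) = 0 := by
      rw [← map_add, hsum, hH]
    have hRPbψ : R (H (Pb ψ)) = Pb ψ := by
      have := hR3 ψ
      rwa [← hRPb (H (Pb ψ))] at this
    have key : Pb ψ = - R (H (P ψ)) := by
      have h1 : H (Pb ψ) = - H (P ψ) := by
        rw [eq_neg_iff_add_eq_zero, add_comm]; exact hHsplit
      rw [← hRPbψ, h1, map_neg]
    have hψQ : ψ = P ψ - R (H (P ψ)) := by
      conv_lhs => rw [hdec, key]
      rw [sub_eq_add_neg]
    constructor
    · intro h0
      apply hψ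
      rw [hψQ, h0, map_zero, map_zero, sub_zero]
    · have : H (P ψ - R (H (P ψ))) = 0 := by rw [← hψQ, hH]
      rw [map_sub] at this
      calc P (H (P ψ)) - P (H (R (H (P ψ))))
          = P (H (P ψ) - H (R (H (P ψ)))) := by rw [map_sub]
        _ = P 0 := by rw [this]
        _ = 0 := map_zero P
  · intro φ hφ hPφ hF
    set ψ := P φ - R (H (P φ)) with hψdef
    have hPψ : P ψ = φ := by
      rw [hψdef, map_sub, hPidem, hRPb, hR1, hPPb, sub_zero, hPφ]
    constructor
    · intro h0
      apply hφ; rw [← hPψ, h0, map_zero]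
    · have hPbHψ : Pb (H ψ) = 0 := by
        rw [hψdef, map_sub, map_sub]
        rw [hRPb (H (P φ)), hR2]
        simp
      have hPHψ : P (H ψ) = 0 := by
        rw [hψdef, map_sub, map_sub]
        exact hF
      have := hsum (H ψ)
      rw [hPHψ, hPbHψ, add_zero] at this
      exact this.symm
end
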